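/- (Theorem 3.6) For a complex Finsler space the following assertions are equivalent: (i) F is a generalized Berwald space, i.e. the Berwald coefficients ᴮLⁱ_{jk} depend only on the position z; (ii) the spray coefficients Gⁱ are holomorphic in η, i.e. ∂̇_k̄ Gⁱ = 0 for all k; (iii) the connection BΓ is of (1,0)-type, i.e. ᴮLⁱ_{jk̄} = 0. -/

import Mathlib

open scoped BigOperators ComplexOrder
open ComplexConjugate

noncomputable section

/-- Points of ℂⁿ in local coordinates. -/
abbrev Vec (n : ℕ) := Fin n → ℂ

/-- Complex-valued functions of `(z, η)` on ℂⁿ × ℂⁿ. -/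
abbrev Fn (n : ℕ) := Vec n → Vec n → ℂ

/-- Wirtinger derivative `∂f/∂vᵏ` of `f` at `v`. -/
def wirt {n : ℕ} (k : Fin n) (f : Vec n → ℂ) (v : Vec n) : ℂ :=
  (1/2) * (fderiv ℝ f v (Pi.single k 1) - Complex.I * fderiv ℝ f v (Pi.single k Complex.I))

/-- Conjugate Wirtinger derivative `∂f/∂v̄ᵏ` of `f` at `v`. -/
def wirtBar {n : ℕ} (k : Fin n) (f : Vec n → ℂ) (v : Vec n) : ℂ :=
  (1/2) * (fderiv ℝ f v (Pi.single k 1) + Complex.I * fderiv ℝ f v (Pi.single k Complex.I))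

variable {n : ℕ}

/-- `∂/∂zᵏ` (Wirtinger derivative in the base variable). -/
def dz (k : Fin n) (f : Fn n) : Fn n := fun z η => wirt k (fun w => f w η) z

/-- `∂/∂z̄ᵏ`. -/
def dzBar (k : Fin n) (f : Fn n) : Fn n := fun z η => wirtBar k (fun w => f w η) z

/-- `∂̇_k = ∂/∂ηᵏ` (Wirtinger derivative in the fibre variable). -/
def de (k : Fin n) (f : Fn n) : Fn n := fun z η => wirt k (f z) η

/-- `∂̇_k̄ = ∂/∂η̄ᵏ`. -/
def deBar (k : Fin n) (f : Fn n) : Fn n := fun z η => wirtBar k (f z) η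

/-- `L = F²` viewed as a complex-valued function. -/
def Lsq (F : Vec n → Vec n → ℝ) : Fn n := fun z η => ((F z η) ^ 2 : ℂ)

/-- Fundamental metric tensor `g_{ij̄} = ∂²L/∂ηⁱ∂η̄ʲ`. -/
def gM (F : Vec n → Vec n → ℝ) (i j : Fin n) : Fn n := de i (deBar j (Lsq F))

/-- `g` as a matrix, rows = unbarred index, columns = barred index. -/
def gmat (F : Vec n → Vec n → ℝ) (z η : Vec n) : Matrix (Fin n) (Fin n) ℂ :=
  Matrix.of fun i j => gM F i j z η

/-- Inverse metric `g^{m̄i}`, satisfying `g^{m̄i} g_{lm̄} = δˡᵢ`. -/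
def gInv (F : Vec n → Vec n → ℝ) (m i : Fin n) : Fn n := fun z η => (gmat F z η)⁻¹ m i

/-- Chern–Finsler nonlinear connection `Nⁱ_j = g^{m̄i} (∂g_{lm̄}/∂zʲ) ηˡ`. -/
def CFN (F : Vec n → Vec n → ℝ) (i j : Fin n) : Fn n :=
  fun z η => ∑ m, ∑ l, gInv F m i z η * dz j (gM F l m) z η * η l

/-- Chern–Finsler horizontal coefficients `Lⁱ_{jk} = ∂̇_j Nⁱ_k`. -/
def CFL (F : Vec n → Vec n → ℝ) (i j k : Fin n) : Fn n := de j (CFN F i k)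

/-- `δ_k = ∂/∂zᵏ − Nʲ_k ∂̇_j`. -/
def CFdelta (F : Vec n → Vec n → ℝ) (k : Fin n) (f : Fn n) : Fn n :=
  fun z η => dz k f z η - ∑ j, CFN F j k z η * de j f z η

/-- Conjugate `δ_k̄ = ∂/∂z̄ᵏ − conj(Nʲ_k) ∂̇_j̄`. -/
def CFdeltaBar (F : Vec n → Vec n → ℝ) (k : Fin n) (f : Fn n) : Fn n :=
  fun z η => dzBar k f z η - ∑ j, conj (CFN F j k z η) * deBar j f z η

/-- Cartan tensor `C_{ij̄k} = ∂̇_k g_{ij̄}`. -/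
def CarT (F : Vec n → Vec n → ℝ) (i j k : Fin n) : Fn n := de k (gM F i j)

/-- Cartan tensor `C_{ij̄k̄} = ∂̇_k̄ g_{ij̄}`. -/
def CarB (F : Vec n → Vec n → ℝ) (i j k : Fin n) : Fn n := deBar k (gM F i j)

/-- Spray coefficients `Gⁱ = (1/2) Nⁱ_j ηʲ`. -/
def spray (F : Vec n → Vec n → ℝ) (i : Fin n) : Fn n :=
  fun z η => (1/2) * ∑ j, CFN F i j z η * η j

/-- Canonical nonlinear connection `ᶜNⁱ_j = ∂̇_j Gⁱ`. -/
def cN (F : Vec n → Vec n → ℝ) (i j : Fin n) : Fn n := de j (spray F i)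

/-- `ᶜδ_k = ∂/∂zᵏ − ᶜNʲ_k ∂̇_j`. -/
def cDelta (F : Vec n → Vec n → ℝ) (k : Fin n) (f : Fn n) : Fn n :=
  fun z η => dz k f z η - ∑ j, cN F j k z η * de j f z η

/-- Conjugate `ᶜδ_k̄ = ∂/∂z̄ᵏ − conj(ᶜNʲ_k) ∂̇_j̄`. -/
def cDeltaBar (F : Vec n → Vec n → ℝ) (k : Fin n) (f : Fn n) : Fn n :=
  fun z η => dzBar k f z η - ∑ j, conj (cN F j k z η) * deBar j f z η

/-- Berwald coefficients `ᴮLⁱ_{jk} = ∂̇_k ᶜNⁱ_j`. -/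
def BL (F : Vec n → Vec n → ℝ) (i j k : Fin n) : Fn n := de k (cN F i j)

/-- Mixed Berwald coefficients `ᴮLⁱ_{jk̄} = ∂̇_k̄ ᶜNⁱ_j`. -/
def BLmix (F : Vec n → Vec n → ℝ) (i j k : Fin n) : Fn n := deBar k (cN F i j)

/-- `ᴮL^m̄_{j̄k} = conj(ᴮLᵐ_{jk̄})`. -/
def BLbar (F : Vec n → Vec n → ℝ) (m j k : Fin n) : Fn n := fun z η => conj (BLmix F m j k z η)

/-- `ᴮL^m̄_{j̄k̄} = conj(ᴮLᵐ_{jk})`. -/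
def BLbarbar (F : Vec n → Vec n → ℝ) (m j k : Fin n) : Fn n := fun z η => conj (BL F m j k z η)

/-- Rund coefficients `ᶜLⁱ_{jk} = (1/2) g^{l̄i} (ᶜδ_k g_{jl̄} + ᶜδ_j g_{kl̄})`. -/
def RL (F : Vec n → Vec n → ℝ) (i j k : Fin n) : Fn n :=
  fun z η => (1/2) * ∑ l, gInv F l i z η *
    (cDelta F k (gM F j l) z η + cDelta F j (gM F k l) z η)

/-- Mixed Rund coefficients `ᶜLⁱ_{jk̄} = (1/2) g^{l̄i} (ᶜδ_k̄ g_{jl̄} − ᶜδ_l̄ g_{jk̄})`. -/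
def RLmix (F : Vec n → Vec n → ℝ) (i j k : Fin n) : Fn n :=
  fun z η => (1/2) * ∑ l, gInv F l i z η *
    (cDeltaBar F k (gM F j l) z η - cDeltaBar F l (gM F j k) z η)

/-- `ᶜL^m̄_{j̄k} = conj(ᶜLᵐ_{jk̄})`. -/
def RLbar (F : Vec n → Vec n → ℝ) (m j k : Fin n) : Fn n := fun z η => conj (RLmix F m j k z η)

/-- Berwald horizontal covariant derivative of the metric:
`g_{ij̄ ᴮ|k} = ᶜδ_k g_{ij̄} − ᴮLˡ_{ik} g_{lj̄} − ᴮL^m̄_{j̄k} g_{im̄}`. -/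
def gB (F : Vec n → Vec n → ℝ) (i j k : Fin n) : Fn n :=
  fun z η => cDelta F k (gM F i j) z η - (∑ l, BL F l i k z η * gM F l j z η)
    - ∑ m, BLbar F m j k z η * gM F i m z η

/-- Berwald horizontal covariant derivative of the Cartan tensor `C_{ij̄h ᴮ|k}`. -/
def CB (F : Vec n → Vec n → ℝ) (i j h k : Fin n) : Fn n :=
  fun z η => cDelta F k (CarT F i j h) z η - (∑ l, BL F l i k z η * CarT F l j h z η)
    - (∑ m, BLbar F m j k z η * CarT F i m h z η)
    - ∑ l, BL F l h k z η * CarT F i j l z η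

/-- Conjugate-horizontal Berwald covariant derivative of the Cartan tensor `C_{ij̄h ᴮ|k̄}`. -/
def CBbar (F : Vec n → Vec n → ℝ) (i j h k : Fin n) : Fn n :=
  fun z η => cDeltaBar F k (CarT F i j h) z η - (∑ l, BLmix F l i k z η * CarT F l j h z η)
    - (∑ m, BLbarbar F m j k z η * CarT F i m h z η)
    - ∑ l, BLmix F l h k z η * CarT F i j l z η

/-- Berwald horizontal covariant derivative of the barred Cartan tensor `C_{ij̄h̄ ᴮ|k}`. -/
def CbB (F : Vec n → Vec n → ℝ) (i j h k : Fin n) : Fn n :=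
  fun z η => cDelta F k (CarB F i j h) z η - (∑ l, BL F l i k z η * CarB F l j h z η)
    - (∑ m, BLbar F m j k z η * CarB F i m h z η)
    - ∑ m, BLbar F m h k z η * CarB F i j m z η

/-- Chern–Finsler horizontal covariant derivative of the Cartan tensor:
`C_{lr̄h|k} = δ_k C_{lr̄h} − Lⁱ_{lk} C_{ir̄h} − Lⁱ_{hk} C_{lr̄i}`. -/
def CCf (F : Vec n → Vec n → ℝ) (l r h k : Fin n) : Fn n :=
  fun z η => CFdelta F k (CarT F l r h) z η - (∑ i, CFL F i l k z η * CarT F i r h z η)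
    - ∑ i, CFL F i h k z η * CarT F l r i z η

/-- Chern–Finsler conjugate-horizontal covariant derivative of the Cartan tensor:
`C_{lr̄h|k̄} = δ_k̄ C_{lr̄h} − conj(Lᵐ_{rk}) C_{lm̄h}`. -/
def CCfBar (F : Vec n → Vec n → ℝ) (l r h k : Fin n) : Fn n :=
  fun z η => CFdeltaBar F k (CarT F l r h) z η - ∑ m, conj (CFL F m r k z η) * CarT F l m h z η

/-- Chern–Finsler horizontal covariant derivative of the barred Cartan tensor:
`C_{lr̄h̄|k} = δ_k C_{lr̄h̄} − Lⁱ_{lk} C_{ir̄h̄}`. -/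
def CbCf (F : Vec n → Vec n → ℝ) (l r h k : Fin n) : Fn n :=
  fun z η => CFdelta F k (CarB F l r h) z η - ∑ i, CFL F i l k z η * CarB F i r h z η

/-- A complex Finsler space on an open domain `D ⊆ ℂⁿ` in local coordinates. -/
structure ComplexFinslerSpace (n : ℕ) where
  D : Set (Vec n)
  isOpen_D : IsOpen D
  F : Vec n → Vec n → ℝ
  smoothL : ContDiffOn ℝ (⊤ : ℕ∞) (fun p : Vec n × Vec n => (F p.1 p.2) ^ 2)
    (D ×ˢ {η : Vec n | η ≠ 0})
  nonneg : ∀ z ∈ D, ∀ η, 0 ≤ F z η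
  eq_zero_iff : ∀ z ∈ D, ∀ η, F z η = 0 ↔ η = 0
  homogeneous : ∀ z ∈ D, ∀ η, ∀ lam : ℂ, F z (lam • η) = ‖lam‖ * F z η
  posdef : ∀ z ∈ D, ∀ η, η ≠ 0 → (gmat F z η).PosDef

end


noncomputable section
open scoped BigOperators ComplexOrder ContDiff
open ComplexConjugate Complex Filter Set

variable {n : ℕ} {f g : Vec n → ℂ} {v : Vec n} {k : Fin n}

lemma wirt_congr (h : f =ᶠ[nhds v] g) : wirt k f v = wirt k g v := by
  unfold wirt; rw [h.fderiv_eq]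

lemma wirtBar_congr (h : f =ᶠ[nhds v] g) : wirtBar k f v = wirtBar k g v := by
  unfold wirtBar; rw [h.fderiv_eq]

lemma wirt_const (c : ℂ) : wirt k (fun _ => c) v = 0 := by
  simp [wirt, fderiv_const]

lemma wirtBar_const (c : ℂ) : wirtBar k (fun _ => c) v = 0 := by
  simp [wirtBar, fderiv_const]

lemma wirt_add (hf : DifferentiableAt ℝ f v) (hg : DifferentiableAt ℝ g v) :
    wirt k (fun x => f x + g x) v = wirt k f v + wirt k g v := by
  unfold wirt; rw [fderiv_fun_add hf hg]; simp; ring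

lemma wirtBar_add (hf : DifferentiableAt ℝ f v) (hg : DifferentiableAt ℝ g v) :
    wirtBar k (fun x => f x + g x) v = wirtBar k f v + wirtBar k g v := by
  unfold wirtBar; rw [fderiv_fun_add hf hg]; simp; ring

lemma wirt_const_mul (c : ℂ) (hf : DifferentiableAt ℝ f v) :
    wirt k (fun x => c * f x) v = c * wirt k f v := by
  unfold wirt
  have : (fun x => c * f x) = (fun x => c • f x) := by simp [smul_eq_mul]
  rw [this, fderiv_fun_const_smul hf]; simp [smul_eq_mul]; ring

lemma wirtBar_const_mul (c : ℂ) (hf : DifferentiableAt ℝ f v) :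
    wirtBar k (fun x => c * f x) v = c * wirtBar k f v := by
  unfold wirtBar
  have : (fun x => c * f x) = (fun x => c • f x) := by simp [smul_eq_mul]
  rw [this, fderiv_fun_const_smul hf]; simp [smul_eq_mul]; ring

lemma wirt_mul (hf : DifferentiableAt ℝ f v) (hg : DifferentiableAt ℝ g v) :
    wirt k (fun x => f x * g x) v = wirt k f v * g v + f v * wirt k g v := by
  unfold wirt; rw [fderiv_fun_mul hf hg]; simp [smul_eq_mul]; ring

lemma wirtBar_mul (hf : DifferentiableAt ℝ f v) (hg : DifferentiableAt ℝ g v) :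
    wirtBar k (fun x => f x * g x) v = wirtBar k f v * g v + f v * wirtBar k g v := by
  unfold wirtBar; rw [fderiv_fun_mul hf hg]; simp [smul_eq_mul]; ring

lemma wirt_sum {ι : Type*} (s : Finset ι) {F : ι → Vec n → ℂ}
    (hF : ∀ i ∈ s, DifferentiableAt ℝ (F i) v) :
    wirt k (fun x => ∑ i ∈ s, F i x) v = ∑ i ∈ s, wirt k (F i) v := by
  unfold wirt; rw [fderiv_fun_sum hF]; simp only [ContinuousLinearMap.coe_sum', Finset.sum_apply]
  rw [Finset.mul_sum, ← Finset.sum_sub_distrib, Finset.mul_sum]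

lemma wirtBar_sum {ι : Type*} (s : Finset ι) {F : ι → Vec n → ℂ}
    (hF : ∀ i ∈ s, DifferentiableAt ℝ (F i) v) :
    wirtBar k (fun x => ∑ i ∈ s, F i x) v = ∑ i ∈ s, wirtBar k (F i) v := by
  unfold wirtBar; rw [fderiv_fun_sum hF]; simp only [ContinuousLinearMap.coe_sum', Finset.sum_apply]
  rw [Finset.mul_sum, ← Finset.sum_add_distrib, Finset.mul_sum]

def eb (k : Fin n) : Vec n := Pi.single k 1
def ib (k : Fin n) : Vec n := Pi.single k Complex.I

lemma single_decomp (k : Fin n) (c : ℂ) :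
    Pi.single k c = c.re • eb k + c.im • ib k := by
  funext j
  by_cases h : j = k
  · subst h; simp [eb, ib, Complex.real_smul, Complex.ext_iff]
  · simp [eb, ib, Pi.single_eq_of_ne h]

lemma coord_decomp (u : Vec n) :
    u = ∑ j, ((u j).re • eb j + (u j).im • ib j) := by
  conv_lhs => rw [← Finset.univ_sum_single u]
  exact Finset.sum_congr rfl fun j _ => single_decomp j (u j)

lemma fderiv_apply_eq (hf : DifferentiableAt ℝ f v) (u : Vec n) :
    fderiv ℝ f v u = ∑ j, (u j * wirt j f v + conj (u j) * wirtBar j f v) := by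
  set D := fderiv ℝ f v with hD
  have h1 : D u = ∑ j, ((u j).re • D (eb j) + (u j).im • D (ib j)) := by
    conv_lhs => rw [coord_decomp u]
    rw [map_sum]
    exact Finset.sum_congr rfl fun j _ => by rw [map_add, map_smul, map_smul]
  rw [h1]
  refine Finset.sum_congr rfl fun j _ => ?_
  set A := D (eb j) with hA
  set B := D (ib j) with hB
  set x := u j with hx
  set a := x.re with ha
  set b := x.im with hb
  have hw : wirt j f v = (1/2) * (A - Complex.I * B) := rfl
  have hwb : wirtBar j f v = (1/2) * (A + Complex.I * B) := rfl
  have hc : conj x = (a : ℂ) - (b : ℂ) * Complex.I := by simp [Complex.ext_iff, ha, hb]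
  have hx2 : x = (a : ℂ) + (b : ℂ) * Complex.I := by simp [Complex.ext_iff, ha, hb]
  have hsm : (a • A + b • B : ℂ) = (a : ℂ) * A + (b : ℂ) * B := by
    simp [Complex.real_smul]
  rw [hw, hwb, hc, hsm, hx2]
  have hI : Complex.I * Complex.I = -1 := Complex.I_mul_I
  linear_combination ((b : ℂ) * B) * hI

lemma differentiableAt_complex_of_wirtBar (hf : DifferentiableAt ℝ f v)
    (h : ∀ k, wirtBar k f v = 0) : DifferentiableAt ℂ f v := by
  set ℓ : Vec n →L[ℂ] ℂ := ∑ j, wirt j f v • ContinuousLinearMap.proj j with hℓ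
  have heq : ℓ.restrictScalars ℝ = fderiv ℝ f v := by
    ext u
    rw [ContinuousLinearMap.coe_restrictScalars']
    rw [fderiv_apply_eq hf u]
    simp only [hℓ, ContinuousLinearMap.coe_sum', Finset.sum_apply,
      ContinuousLinearMap.coe_smul', Pi.smul_apply, ContinuousLinearMap.proj_apply,
      smul_eq_mul, h, mul_zero, add_zero]
    exact Finset.sum_congr rfl fun j _ => mul_comm _ _
  exact ⟨ℓ, hasFDerivAt_of_restrictScalars ℝ hf.hasFDerivAt heq⟩

lemma wirt_comp_smul (lam : ℂ) (hf : DifferentiableAt ℝ f (lam • v)) :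
    wirt k (fun x => f (lam • x)) v = lam * wirt k f (lam • v) := by
  have hm : HasFDerivAt (fun x : Vec n => lam • x)
      ((lam • ContinuousLinearMap.id ℂ (Vec n)).restrictScalars ℝ) v :=
    ((lam • ContinuousLinearMap.id ℂ (Vec n)).restrictScalars ℝ).hasFDerivAt
  have hcomp := (hf.hasFDerivAt.comp v hm).fderiv
  have hap : ∀ w : Vec n, fderiv ℝ (fun x => f (lam • x)) v w = fderiv ℝ f (lam • v) (lam • w) := by
    intro w
    rw [show (fun x : Vec n => f (lam • x)) = f ∘ (fun x : Vec n => lam • x) from rfl, hcomp]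
    rfl
  set D := fderiv ℝ f (lam • v) with hD
  set A := D (eb k) with hA
  set B := D (ib k) with hB
  have h1 : lam • eb k = (Pi.single k lam : Vec n) := by
    funext j; by_cases h : j = k
    · subst h; simp [eb]
    · simp [eb, Pi.single_eq_of_ne h]
  have h2 : lam • ib k = (Pi.single k (lam * Complex.I) : Vec n) := by
    funext j; by_cases h : j = k
    · subst h; simp [ib]
    · simp [ib, Pi.single_eq_of_ne h]
  have e1 : fderiv ℝ (fun x => f (lam • x)) v (eb k) = lam.re • A + lam.im • B := by
    rw [hap, h1, single_decomp, map_add, map_smul, map_smul]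
  have e2 : fderiv ℝ (fun x => f (lam • x)) v (ib k) =
      (lam * Complex.I).re • A + (lam * Complex.I).im • B := by
    rw [hap, h2, single_decomp, map_add, map_smul, map_smul]
  have hw : wirt k (fun x => f (lam • x)) v =
      (1/2) * ((fderiv ℝ (fun x => f (lam • x)) v (eb k)) -
        Complex.I * (fderiv ℝ (fun x => f (lam • x)) v (ib k))) := rfl
  have hw2 : wirt k f (lam • v) = (1/2) * (A - Complex.I * B) := rfl
  rw [hw, e1, e2, hw2]
  set a := lam.re; set b := lam.im
  have hsm : ∀ (x y : ℝ) (C E : ℂ), (x • C + y • E : ℂ) = (x:ℂ) * C + (y:ℂ) * E := by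
    intro x y C E; simp [Complex.real_smul]
  rw [hsm, hsm]
  have hlam : lam = (a : ℂ) + (b : ℂ) * Complex.I := by simp [Complex.ext_iff, a, b]
  have hre : ((lam * Complex.I).re : ℂ) = -(b : ℂ) := by simp [b]
  have him : ((lam * Complex.I).im : ℂ) = (a : ℂ) := by simp [a]
  rw [hre, him, hlam]
  have hI : Complex.I * Complex.I = -1 := Complex.I_mul_I
  linear_combination (((b : ℂ) * B) / 2) * hI

lemma wirtBar_comp_smul (lam : ℂ) (hf : DifferentiableAt ℝ f (lam • v)) :
    wirtBar k (fun x => f (lam • x)) v = conj lam * wirtBar k f (lam • v) := by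
  have hm : HasFDerivAt (fun x : Vec n => lam • x)
      ((lam • ContinuousLinearMap.id ℂ (Vec n)).restrictScalars ℝ) v :=
    ((lam • ContinuousLinearMap.id ℂ (Vec n)).restrictScalars ℝ).hasFDerivAt
  have hcomp := (hf.hasFDerivAt.comp v hm).fderiv
  have hap : ∀ w : Vec n, fderiv ℝ (fun x => f (lam • x)) v w = fderiv ℝ f (lam • v) (lam • w) := by
    intro w
    rw [show (fun x : Vec n => f (lam • x)) = f ∘ (fun x : Vec n => lam • x) from rfl, hcomp]
    rfl
  set D := fderiv ℝ f (lam • v) with hD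
  set A := D (eb k) with hA
  set B := D (ib k) with hB
  have h1 : lam • eb k = (Pi.single k lam : Vec n) := by
    funext j; by_cases h : j = k
    · subst h; simp [eb]
    · simp [eb, Pi.single_eq_of_ne h]
  have h2 : lam • ib k = (Pi.single k (lam * Complex.I) : Vec n) := by
    funext j; by_cases h : j = k
    · subst h; simp [ib]
    · simp [ib, Pi.single_eq_of_ne h]
  have e1 : fderiv ℝ (fun x => f (lam • x)) v (eb k) = lam.re • A + lam.im • B := by
    rw [hap, h1, single_decomp, map_add, map_smul, map_smul]
  have e2 : fderiv ℝ (fun x => f (lam • x)) v (ib k) =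
      (lam * Complex.I).re • A + (lam * Complex.I).im • B := by
    rw [hap, h2, single_decomp, map_add, map_smul, map_smul]
  have hw : wirtBar k (fun x => f (lam • x)) v =
      (1/2) * ((fderiv ℝ (fun x => f (lam • x)) v (eb k)) +
        Complex.I * (fderiv ℝ (fun x => f (lam • x)) v (ib k))) := rfl
  have hw2 : wirtBar k f (lam • v) = (1/2) * (A + Complex.I * B) := rfl
  rw [hw, e1, e2, hw2]
  set a := lam.re; set b := lam.im
  have hsm : ∀ (x y : ℝ) (C E : ℂ), (x • C + y • E : ℂ) = (x:ℂ) * C + (y:ℂ) * E := by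
    intro x y C E; simp [Complex.real_smul]
  rw [hsm, hsm]
  have hre : ((lam * Complex.I).re : ℂ) = -(b : ℂ) := by simp [b]
  have him : ((lam * Complex.I).im : ℂ) = (a : ℂ) := by simp [a]
  have hcl : conj lam = (a : ℂ) - (b : ℂ) * Complex.I := by simp [Complex.ext_iff, a, b]
  rw [hre, him, hcl]
  have hI : Complex.I * Complex.I = -1 := Complex.I_mul_I
  linear_combination (((b : ℂ) * B) / 2) * hI

lemma hasDerivAt_dir (hf : DifferentiableAt ℝ f v) (w : Vec n) :
    HasDerivAt (fun t : ℝ => f (v + t • w)) (fderiv ℝ f v w) 0 := by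
  have hc : HasDerivAt (fun t : ℝ => v + t • w) w 0 := by
    simpa using ((hasDerivAt_id (0:ℝ)).smul_const w).const_add v
  have h0 : v + (0:ℝ) • w = v := by simp
  have hf' : HasFDerivAt f (fderiv ℝ f v) (v + (0:ℝ) • w) := by simpa [h0] using hf.hasFDerivAt
  have := hf'.comp_hasDerivAt 0 hc
  exact this

lemma wirt_wirtBar_comm {f : Vec n → ℂ} {v : Vec n} (hf : ContDiffAt ℝ 2 f v) (j m : Fin n) :
    wirt j (wirtBar m f) v = wirtBar m (wirt j f) v := by
  have hd1 : DifferentiableAt ℝ (fderiv ℝ f) v := by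
    have h := hf.fderiv_right (m := 1) (by norm_num)
    exact h.differentiableAt (by norm_num)
  have hg : ∀ w : Vec n, DifferentiableAt ℝ (fun x => fderiv ℝ f x w) v := fun w =>
    (ContinuousLinearMap.apply ℝ ℂ w).differentiableAt.comp v hd1
  have hfd : ∀ w u : Vec n, fderiv ℝ (fun x => fderiv ℝ f x w) v u
      = fderiv ℝ (fderiv ℝ f) v u w := by
    intro w u
    rw [fderiv_clm_apply hd1 (differentiableAt_const w)]
    simp
  set D2 := fderiv ℝ (fderiv ℝ f) v with hD2
  have hsym : ∀ u w, D2 u w = D2 w u := fun u w => (hf.isSymmSndFDerivAt (by simp)) u w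
  have e2 : ∀ w : Vec n, wirt j (fun x => fderiv ℝ f x w) v
      = 1/2 * (D2 (Pi.single j 1) w - Complex.I * D2 (Pi.single j Complex.I) w) := by
    intro w
    unfold wirt
    rw [hfd w (Pi.single j 1), hfd w (Pi.single j Complex.I)]
  have e3 : ∀ w : Vec n, wirtBar m (fun x => fderiv ℝ f x w) v
      = 1/2 * (D2 (Pi.single m 1) w + Complex.I * D2 (Pi.single m Complex.I) w) := by
    intro w
    unfold wirtBar
    rw [hfd w (Pi.single m 1), hfd w (Pi.single m Complex.I)]
  have eL : wirt j (wirtBar m f) v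
      = 1/2 * (wirt j (fun x => fderiv ℝ f x (Pi.single m 1)) v
        + Complex.I * wirt j (fun x => fderiv ℝ f x (Pi.single m Complex.I)) v) := by
    have hfun : wirtBar m f = fun x => (1/2 : ℂ) * (fderiv ℝ f x (Pi.single m 1)
        + Complex.I * fderiv ℝ f x (Pi.single m Complex.I)) := rfl
    rw [hfun, wirt_const_mul _ ((hg _).fun_add ((hg _).const_mul Complex.I)),
      wirt_add (hg _) ((hg _).const_mul Complex.I)]
    congr 1
    rw [wirt_const_mul _ (hg _)]
  have eR : wirtBar m (wirt j f) v
      = 1/2 * (wirtBar m (fun x => fderiv ℝ f x (Pi.single j 1)) v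
        - Complex.I * wirtBar m (fun x => fderiv ℝ f x (Pi.single j Complex.I)) v) := by
    have hfun : wirt j f = fun x => (1/2 : ℂ) * (fderiv ℝ f x (Pi.single j 1)
        - Complex.I * fderiv ℝ f x (Pi.single j Complex.I)) := rfl
    have hsub : ∀ x, fderiv ℝ f x (Pi.single j 1) - Complex.I * fderiv ℝ f x (Pi.single j Complex.I)
        = fderiv ℝ f x (Pi.single j 1) + (-Complex.I) * fderiv ℝ f x (Pi.single j Complex.I) := by
      intro x; ring
    rw [hfun]
    simp only [hsub]
    rw [wirtBar_const_mul _ ((hg _).fun_add ((hg _).const_mul (-Complex.I))),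
      wirtBar_add (hg _) ((hg _).const_mul (-Complex.I))]
    congr 1
    rw [wirtBar_const_mul _ (hg _)]
    ring
  rw [eL, eR, e2, e2, e3, e3]
  rw [hsym (Pi.single j 1) (Pi.single m 1), hsym (Pi.single j 1) (Pi.single m Complex.I),
    hsym (Pi.single j Complex.I) (Pi.single m 1),
    hsym (Pi.single j Complex.I) (Pi.single m Complex.I)]
  ring

lemma hasDerivAt_one_add_pow (w c : ℂ) (p : ℕ) (_hp : 1 ≤ p) :
    HasDerivAt (fun t : ℝ => (1 + (t:ℂ) * w)^p * c) ((p : ℂ) * w * c) 0 := by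
  have hco : HasDerivAt (fun t : ℝ => (t : ℂ)) 1 0 := by
    have := Complex.ofRealCLM.hasDerivAt (x := (0:ℝ)); exact this
  have h1 : HasDerivAt (fun t : ℝ => 1 + (t:ℂ) * w) w 0 := by
    simpa using (hco.mul_const w).const_add 1
  have hpow : ∀ q : ℕ, HasDerivAt (fun t : ℝ => (1 + (t:ℂ) * w)^q) ((q:ℂ) * w) 0 := by
    intro q
    induction q with
    | zero => simpa using hasDerivAt_const (0:ℝ) (1:ℂ)
    | succ q ih =>
      have h2 := ih.fun_mul h1
      have h3 : (fun t : ℝ => (1 + (t:ℂ) * w)^q * (1 + (t:ℂ) * w))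
          = fun t : ℝ => (1 + (t:ℂ) * w)^(q+1) := by
        funext t; rw [← pow_succ]
      rw [h3] at h2
      refine h2.congr_deriv ?_
      push_cast
      ring
  simpa using (hpow p).mul_const c

lemma euler_directional {f : Vec n → ℂ} {v : Vec n} (p : ℕ) (hp : 1 ≤ p)
    (hf : DifferentiableAt ℝ f v)
    (h2 : ∀ᶠ lam : ℂ in nhds 1, f (lam • v) = lam ^ p * f v) :
    (fderiv ℝ f v v = (p : ℂ) * f v) ∧ (fderiv ℝ f v (Complex.I • v) = (p : ℂ) * Complex.I * f v) := by
  constructor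
  · have d1 := hasDerivAt_dir hf v
    have hcont : Filter.Tendsto (fun t : ℝ => 1 + (t:ℂ)) (nhds 0) (nhds 1) := by
      have : Continuous (fun t : ℝ => 1 + (t:ℂ)) := continuous_const.add Complex.continuous_ofReal
      simpa using this.tendsto 0
    have hev : (fun t : ℝ => f (v + t • v)) =ᶠ[nhds (0:ℝ)] (fun t : ℝ => (1 + (t:ℂ))^p * f v) := by
      filter_upwards [hcont.eventually h2] with t ht
      have hv : v + t • v = (1 + (t:ℂ)) • v := by
        funext i; simp [Complex.real_smul]; ring
      rw [hv, ht]
    have d2 : HasDerivAt (fun t : ℝ => (1 + (t:ℂ))^p * f v) (fderiv ℝ f v v) 0 :=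
      d1.congr_of_eventuallyEq hev.symm
    have d3 : HasDerivAt (fun t : ℝ => (1 + (t:ℂ))^p * f v) ((p:ℂ) * f v) 0 := by
      simpa using hasDerivAt_one_add_pow 1 (f v) p hp
    exact d2.unique d3
  · have d1 := hasDerivAt_dir hf (Complex.I • v)
    have hcont : Filter.Tendsto (fun t : ℝ => 1 + (t:ℂ) * Complex.I) (nhds 0) (nhds 1) := by
      have : Continuous (fun t : ℝ => 1 + (t:ℂ) * Complex.I) :=
        continuous_const.add (Complex.continuous_ofReal.mul continuous_const)
      simpa using this.tendsto 0
    have hev : (fun t : ℝ => f (v + t • (Complex.I • v))) =ᶠ[nhds (0:ℝ)]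
        (fun t : ℝ => (1 + (t:ℂ) * Complex.I)^p * f v) := by
      filter_upwards [hcont.eventually h2] with t ht
      have hv : v + t • (Complex.I • v) = (1 + (t:ℂ) * Complex.I) • v := by
        funext i; simp [Complex.real_smul]; ring
      rw [hv, ht]
    have d2 : HasDerivAt (fun t : ℝ => (1 + (t:ℂ) * Complex.I)^p * f v)
        (fderiv ℝ f v (Complex.I • v)) 0 := d1.congr_of_eventuallyEq hev.symm
    have d3 : HasDerivAt (fun t : ℝ => (1 + (t:ℂ) * Complex.I)^p * f v)
        ((p:ℂ) * Complex.I * f v) 0 := by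
      simpa [mul_comm, mul_assoc, mul_left_comm] using hasDerivAt_one_add_pow Complex.I (f v) p hp
    exact d2.unique d3

lemma euler_wirt {f : Vec n → ℂ} {v : Vec n} (p : ℕ) (hp : 1 ≤ p)
    (hf : DifferentiableAt ℝ f v)
    (h2 : ∀ᶠ lam : ℂ in nhds 1, f (lam • v) = lam ^ p * f v) :
    ∑ k, v k * wirt k f v = (p : ℂ) * f v := by
  obtain ⟨e1, e2⟩ := euler_directional p hp hf h2
  rw [fderiv_apply_eq hf] at e1 e2
  have h3 : ∀ k : Fin n, (Complex.I • v) k = Complex.I * v k := fun k => rfl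
  simp only [h3, map_mul, Complex.conj_I] at e2
  have hAB : Complex.I * ((∑ k, v k * wirt k f v) - ∑ k, conj (v k) * wirtBar k f v)
      = ∑ x, (Complex.I * v x * wirt x f v + -Complex.I * conj (v x) * wirtBar x f v) := by
    rw [mul_sub, Finset.mul_sum, Finset.mul_sum, ← Finset.sum_sub_distrib]
    exact Finset.sum_congr rfl fun k _ => by ring
  have e2'' : (∑ k, v k * wirt k f v) - ∑ k, conj (v k) * wirtBar k f v = (p:ℂ) * f v :=
    mul_left_cancel₀ Complex.I_ne_zero (by rw [hAB, e2]; ring)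
  rw [Finset.sum_add_distrib] at e1
  linear_combination (e1 + e2'') / 2

def Ju (f : Fn n) : Vec n × Vec n → ℂ := fun p => f p.1 p.2

lemma fderiv_J_snd {f : Fn n} {z η : Vec n} (hf : DifferentiableAt ℝ (Ju f) (z, η)) (w : Vec n) :
    fderiv ℝ (f z) η w = fderiv ℝ (Ju f) (z, η) (0, w) := by
  have hincl := hasFDerivAt_prodMk_right (𝕜 := ℝ) z η
  have h2 : HasFDerivAt (f z)
      ((fderiv ℝ (Ju f) (z, η)).comp (ContinuousLinearMap.inr ℝ (Vec n) (Vec n))) η :=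
    hf.hasFDerivAt.comp η hincl
  rw [h2.fderiv]
  rfl

lemma fderiv_J_fst {f : Fn n} {z η : Vec n} (hf : DifferentiableAt ℝ (Ju f) (z, η)) (w : Vec n) :
    fderiv ℝ (fun w' => f w' η) z w = fderiv ℝ (Ju f) (z, η) (w, 0) := by
  have hincl := hasFDerivAt_prodMk_left (𝕜 := ℝ) z η
  have h2 : HasFDerivAt (fun w' => f w' η)
      ((fderiv ℝ (Ju f) (z, η)).comp (ContinuousLinearMap.inl ℝ (Vec n) (Vec n))) z :=
    by have := hf.hasFDerivAt.comp z hincl; exact this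
  rw [h2.fderiv]
  rfl

lemma de_eqJ {f : Fn n} {z η : Vec n} (hf : DifferentiableAt ℝ (Ju f) (z, η)) (k : Fin n) :
    de k f z η = 1/2 * (fderiv ℝ (Ju f) (z, η) (0, Pi.single k 1)
      - Complex.I * fderiv ℝ (Ju f) (z, η) (0, Pi.single k Complex.I)) := by
  show wirt k (f z) η = _
  unfold wirt
  rw [fderiv_J_snd hf, fderiv_J_snd hf]

lemma deBar_eqJ {f : Fn n} {z η : Vec n} (hf : DifferentiableAt ℝ (Ju f) (z, η)) (k : Fin n) :
    deBar k f z η = 1/2 * (fderiv ℝ (Ju f) (z, η) (0, Pi.single k 1)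
      + Complex.I * fderiv ℝ (Ju f) (z, η) (0, Pi.single k Complex.I)) := by
  show wirtBar k (f z) η = _
  unfold wirtBar
  rw [fderiv_J_snd hf, fderiv_J_snd hf]

lemma dz_eqJ {f : Fn n} {z η : Vec n} (hf : DifferentiableAt ℝ (Ju f) (z, η)) (k : Fin n) :
    dz k f z η = 1/2 * (fderiv ℝ (Ju f) (z, η) (Pi.single k 1, 0)
      - Complex.I * fderiv ℝ (Ju f) (z, η) (Pi.single k Complex.I, 0)) := by
  show wirt k (fun w => f w η) z = _
  unfold wirt
  rw [fderiv_J_fst hf, fderiv_J_fst hf]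

variable {U : Set (Vec n × Vec n)}

lemma diffJ (hU : IsOpen U) {f : Fn n} (hf : ContDiffOn ℝ (⊤ : ℕ∞) (Ju f) U)
    {p : Vec n × Vec n} (hp : p ∈ U) : DifferentiableAt ℝ (Ju f) p :=
  ((hf.differentiableOn (by norm_num)).differentiableAt (hU.mem_nhds hp))

lemma SmJ_de (hU : IsOpen U) {f : Fn n} (hf : ContDiffOn ℝ (⊤ : ℕ∞) (Ju f) U) (k : Fin n) :
    ContDiffOn ℝ (⊤ : ℕ∞) (Ju (de k f)) U := by
  have hfd : ContDiffOn ℝ (⊤ : ℕ∞) (fderiv ℝ (Ju f)) U :=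
    hf.fderiv_of_isOpen hU (by norm_num)
  have hrhs : ContDiffOn ℝ (⊤ : ℕ∞) (fun p => (1:ℂ)/2 * ((fderiv ℝ (Ju f) p) (0, Pi.single k 1)
      - Complex.I * (fderiv ℝ (Ju f) p) (0, Pi.single k Complex.I))) U :=
    contDiffOn_const.mul ((hfd.clm_apply contDiffOn_const).sub
      (contDiffOn_const.mul (hfd.clm_apply contDiffOn_const)))
  exact hrhs.congr fun p hp => by
    obtain ⟨z, η⟩ := p
    exact de_eqJ (diffJ hU hf hp) k

lemma SmJ_deBar (hU : IsOpen U) {f : Fn n} (hf : ContDiffOn ℝ (⊤ : ℕ∞) (Ju f) U) (k : Fin n) :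
    ContDiffOn ℝ (⊤ : ℕ∞) (Ju (deBar k f)) U := by
  have hfd : ContDiffOn ℝ (⊤ : ℕ∞) (fderiv ℝ (Ju f)) U :=
    hf.fderiv_of_isOpen hU (by norm_num)
  have hrhs : ContDiffOn ℝ (⊤ : ℕ∞) (fun p => (1:ℂ)/2 * ((fderiv ℝ (Ju f) p) (0, Pi.single k 1)
      + Complex.I * (fderiv ℝ (Ju f) p) (0, Pi.single k Complex.I))) U :=
    contDiffOn_const.mul ((hfd.clm_apply contDiffOn_const).add
      (contDiffOn_const.mul (hfd.clm_apply contDiffOn_const)))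
  exact hrhs.congr fun p hp => by
    obtain ⟨z, η⟩ := p
    exact deBar_eqJ (diffJ hU hf hp) k

lemma SmJ_dz (hU : IsOpen U) {f : Fn n} (hf : ContDiffOn ℝ (⊤ : ℕ∞) (Ju f) U) (k : Fin n) :
    ContDiffOn ℝ (⊤ : ℕ∞) (Ju (dz k f)) U := by
  have hfd : ContDiffOn ℝ (⊤ : ℕ∞) (fderiv ℝ (Ju f)) U :=
    hf.fderiv_of_isOpen hU (by norm_num)
  have hrhs : ContDiffOn ℝ (⊤ : ℕ∞) (fun p => (1:ℂ)/2 * ((fderiv ℝ (Ju f) p) (Pi.single k 1, 0)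
      - Complex.I * (fderiv ℝ (Ju f) p) (Pi.single k Complex.I, 0))) U :=
    contDiffOn_const.mul ((hfd.clm_apply contDiffOn_const).sub
      (contDiffOn_const.mul (hfd.clm_apply contDiffOn_const)))
  exact hrhs.congr fun p hp => by
    obtain ⟨z, η⟩ := p
    exact dz_eqJ (diffJ hU hf hp) k

lemma restrict_contDiffAt (hU : IsOpen U) {f : Fn n} (hf : ContDiffOn ℝ (⊤ : ℕ∞) (Ju f) U)
    {z η : Vec n} (h : (z, η) ∈ U) : ContDiffAt ℝ (⊤ : ℕ∞) (f z) η := by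
  have h1 : ContDiffAt ℝ (⊤ : ℕ∞) (Ju f) (z, η) := hf.contDiffAt (hU.mem_nhds h)
  exact h1.comp η ((contDiff_prodMk_right z).contDiffAt)

lemma restrict_diffAt (hU : IsOpen U) {f : Fn n} (hf : ContDiffOn ℝ (⊤ : ℕ∞) (Ju f) U)
    {z η : Vec n} (h : (z, η) ∈ U) : DifferentiableAt ℝ (f z) η :=
  (restrict_contDiffAt hU hf h).differentiableAt (by norm_num)

lemma contDiffOn_matrix_det {M : (Vec n × Vec n) → Matrix (Fin n) (Fin n) ℂ}
    (h : ∀ i j, ContDiffOn ℝ (⊤ : ℕ∞) (fun p => M p i j) U) :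
    ContDiffOn ℝ (⊤ : ℕ∞) (fun p => (M p).det) U := by
  have : (fun p => (M p).det)
      = fun p => ∑ σ : Equiv.Perm (Fin n), ((Equiv.Perm.sign σ : ℤ) : ℂ) * ∏ i, M p (σ i) i := by
    funext p
    rw [Matrix.det_apply]
    exact Finset.sum_congr rfl fun σ _ => by rw [Units.smul_def, zsmul_eq_mul]
  rw [this]
  exact ContDiffOn.sum fun σ _ =>
    contDiffOn_const.mul (contDiffOn_prod fun i _ => h (σ i) i)

section SSm
variable (S : ComplexFinslerSpace n)

def UU : Set (Vec n × Vec n) := S.D ×ˢ {η : Vec n | η ≠ 0}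

lemma isOpen_UU : IsOpen (UU S) := S.isOpen_D.prod isOpen_ne

lemma mem_UU {z η : Vec n} (hz : z ∈ S.D) (hη : η ≠ 0) : (z, η) ∈ UU S := ⟨hz, hη⟩

lemma smJ_Lsq : ContDiffOn ℝ (⊤ : ℕ∞) (Ju (Lsq S.F)) (UU S) := by
  have heq : Ju (Lsq S.F) = (fun x : ℝ => (x : ℂ)) ∘ (fun p : Vec n × Vec n => (S.F p.1 p.2)^2) :=
    funext fun p => by simp [Ju, Lsq]
  rw [heq]
  exact Complex.ofRealCLM.contDiff.comp_contDiffOn (S.smoothL.of_le (by simp))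

lemma smJ_gM (i j : Fin n) : ContDiffOn ℝ (⊤ : ℕ∞) (Ju (gM S.F i j)) (UU S) :=
  SmJ_de (isOpen_UU S) (SmJ_deBar (isOpen_UU S) (smJ_Lsq S) j) i

lemma smJ_det : ContDiffOn ℝ (⊤ : ℕ∞) (fun p : Vec n × Vec n => (gmat S.F p.1 p.2).det) (UU S) :=
  contDiffOn_matrix_det fun i j => smJ_gM S i j

lemma det_ne_UU : ∀ p ∈ UU S, (gmat S.F p.1 p.2).det ≠ 0 := fun p hp =>
  (S.posdef p.1 hp.1 p.2 hp.2).det_pos.ne'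

lemma smJ_adj (m i : Fin n) :
    ContDiffOn ℝ (⊤ : ℕ∞) (fun p : Vec n × Vec n => (gmat S.F p.1 p.2).adjugate m i) (UU S) := by
  have heq : (fun p : Vec n × Vec n => (gmat S.F p.1 p.2).adjugate m i)
      = fun p => ((gmat S.F p.1 p.2).updateRow i (Pi.single m 1)).det :=
    funext fun p => Matrix.adjugate_apply _ _ _
  rw [heq]
  refine contDiffOn_matrix_det fun a b => ?_
  by_cases ha : a = i
  · subst ha
    refine ContDiffOn.congr (contDiffOn_const (c := (Pi.single m (1:ℂ) : Vec n) b)) fun p hp => ?_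
    rw [Matrix.updateRow_apply]
    simp
  · refine ContDiffOn.congr (smJ_gM S a b) fun p hp => ?_
    rw [Matrix.updateRow_apply, if_neg ha]
    rfl

lemma smJ_gInv (m i : Fin n) : ContDiffOn ℝ (⊤ : ℕ∞) (Ju (gInv S.F m i)) (UU S) := by
  have heq : ∀ p ∈ UU S, Ju (gInv S.F m i) p
      = ((gmat S.F p.1 p.2).det)⁻¹ * (gmat S.F p.1 p.2).adjugate m i := by
    intro p _
    show (gmat S.F p.1 p.2)⁻¹ m i = _
    rw [Matrix.inv_def, Matrix.smul_apply, Ring.inverse_eq_inv, smul_eq_mul]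
  exact ContDiffOn.congr (((smJ_det S).inv (det_ne_UU S)).mul (smJ_adj S m i)) heq

lemma smJ_coord (l : Fin n) : ContDiffOn ℝ (⊤ : ℕ∞) (fun p : Vec n × Vec n => p.2 l) (UU S) :=
  ((contDiff_pi.mp contDiff_snd) l).contDiffOn

lemma smJ_CFN (i j : Fin n) : ContDiffOn ℝ (⊤ : ℕ∞) (Ju (CFN S.F i j)) (UU S) := by
  have heq : Ju (CFN S.F i j) = fun p : Vec n × Vec n =>
      ∑ m, ∑ l, Ju (gInv S.F m i) p * Ju (dz j (gM S.F l m)) p * p.2 l := rfl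
  rw [heq]
  refine ContDiffOn.sum fun m _ => ContDiffOn.sum fun l _ => ?_
  exact ((smJ_gInv S m i).mul (SmJ_dz (isOpen_UU S) (smJ_gM S l m) j)).mul (smJ_coord S l)

lemma smJ_spray (i : Fin n) : ContDiffOn ℝ (⊤ : ℕ∞) (Ju (spray S.F i)) (UU S) := by
  have heq : Ju (spray S.F i) = fun p : Vec n × Vec n =>
      (1:ℂ)/2 * ∑ j, Ju (CFN S.F i j) p * p.2 j := rfl
  rw [heq]
  exact contDiffOn_const.mul (ContDiffOn.sum fun j _ => (smJ_CFN S i j).mul (smJ_coord S j))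

lemma smJ_cN (i j : Fin n) : ContDiffOn ℝ (⊤ : ℕ∞) (Ju (cN S.F i j)) (UU S) :=
  SmJ_de (isOpen_UU S) (smJ_spray S i) j

lemma smJ_BL (i j k : Fin n) : ContDiffOn ℝ (⊤ : ℕ∞) (Ju (BL S.F i j k)) (UU S) :=
  SmJ_de (isOpen_UU S) (smJ_cN S i j) k

variable {S}

lemma cd_spray {z η : Vec n} (hz : z ∈ S.D) (hη : η ≠ 0) (i : Fin n) :
    ContDiffAt ℝ (⊤ : ℕ∞) (spray S.F i z) η :=
  restrict_contDiffAt (isOpen_UU S) (smJ_spray S i) (mem_UU S hz hη)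

lemma cd_cN {z η : Vec n} (hz : z ∈ S.D) (hη : η ≠ 0) (i j : Fin n) :
    ContDiffAt ℝ (⊤ : ℕ∞) (cN S.F i j z) η :=
  restrict_contDiffAt (isOpen_UU S) (smJ_cN S i j) (mem_UU S hz hη)

lemma cd_BL {z η : Vec n} (hz : z ∈ S.D) (hη : η ≠ 0) (i j k : Fin n) :
    ContDiffAt ℝ (⊤ : ℕ∞) (BL S.F i j k z) η :=
  restrict_contDiffAt (isOpen_UU S) (smJ_BL S i j k) (mem_UU S hz hη)

lemma cd_gM {z η : Vec n} (hz : z ∈ S.D) (hη : η ≠ 0) (i j : Fin n) :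
    ContDiffAt ℝ (⊤ : ℕ∞) (gM S.F i j z) η :=
  restrict_contDiffAt (isOpen_UU S) (smJ_gM S i j) (mem_UU S hz hη)

lemma da_spray {z η : Vec n} (hz : z ∈ S.D) (hη : η ≠ 0) (i : Fin n) :
    DifferentiableAt ℝ (spray S.F i z) η :=
  (cd_spray hz hη i).differentiableAt (by norm_num)

lemma da_cN {z η : Vec n} (hz : z ∈ S.D) (hη : η ≠ 0) (i j : Fin n) :
    DifferentiableAt ℝ (cN S.F i j z) η :=
  (cd_cN hz hη i j).differentiableAt (by norm_num)

lemma da_BL {z η : Vec n} (hz : z ∈ S.D) (hη : η ≠ 0) (i j k : Fin n) :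
    DifferentiableAt ℝ (BL S.F i j k z) η :=
  (cd_BL hz hη i j k).differentiableAt (by norm_num)

end SSm

section SHom
variable {S : ComplexFinslerSpace n}

lemma da_Lsq {z η : Vec n} (hz : z ∈ S.D) (hη : η ≠ 0) :
    DifferentiableAt ℝ (Lsq S.F z) η :=
  restrict_diffAt (isOpen_UU S) (smJ_Lsq S) (mem_UU S hz hη)

lemma da_deBarLsq {z η : Vec n} (hz : z ∈ S.D) (hη : η ≠ 0) (j : Fin n) :
    DifferentiableAt ℝ (deBar j (Lsq S.F) z) η :=
  restrict_diffAt (isOpen_UU S) (SmJ_deBar (isOpen_UU S) (smJ_Lsq S) j) (mem_UU S hz hη)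

lemma smul_ne_zero' {η : Vec n} (hη : η ≠ 0) {lam : ℂ} (hlam : lam ≠ 0) : lam • η ≠ 0 :=
  fun h => hη (by simpa [smul_smul, inv_mul_cancel₀ hlam] using congrArg (fun x => lam⁻¹ • x) h)

lemma hom_Lsq {z : Vec n} (hz : z ∈ S.D) (η : Vec n) (lam : ℂ) :
    Lsq S.F z (lam • η) = (conj lam * lam) * Lsq S.F z η := by
  have habs : ((‖lam‖ ^ 2 : ℝ) : ℂ) = conj lam * lam := by
    rw [← Complex.normSq_eq_norm_sq, mul_comm]
    exact (Complex.mul_conj lam).symm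
  unfold Lsq
  rw [S.homogeneous z hz η lam, ← habs]
  push_cast
  ring

lemma hom_deBarLsq {z η : Vec n} (hz : z ∈ S.D) (hη : η ≠ 0) {lam : ℂ} (hlam : lam ≠ 0)
    (j : Fin n) :
    deBar j (Lsq S.F) z (lam • η) = lam * deBar j (Lsq S.F) z η := by
  have hd : DifferentiableAt ℝ (Lsq S.F z) (lam • η) := da_Lsq hz (smul_ne_zero' hη hlam)
  have key := wirtBar_comp_smul (f := Lsq S.F z) (v := η) (k := j) lam hd
  have heq : (fun x => Lsq S.F z (lam • x)) = fun x => (conj lam * lam) * Lsq S.F z x :=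
    funext fun x => hom_Lsq hz x lam
  rw [heq] at key
  rw [wirtBar_const_mul _ (da_Lsq hz hη)] at key
  have : conj lam * (lam * wirtBar j (Lsq S.F z) η) = conj lam * wirtBar j (Lsq S.F z) (lam • η) := by
    rw [← key]; ring
  have h2 := mul_left_cancel₀ (star_ne_zero.mpr hlam : conj lam ≠ 0) this
  exact h2.symm

lemma hom_gM {z η : Vec n} (hz : z ∈ S.D) (hη : η ≠ 0) {lam : ℂ} (hlam : lam ≠ 0)
    (i j : Fin n) : gM S.F i j z (lam • η) = gM S.F i j z η := by
  set g := deBar j (Lsq S.F) z with hg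
  have hd : DifferentiableAt ℝ g (lam • η) := da_deBarLsq hz (smul_ne_zero' hη hlam) j
  have key := wirt_comp_smul (f := g) (v := η) (k := i) lam hd
  have hEv : (fun x => g (lam • x)) =ᶠ[nhds η] fun x => lam * g x := by
    filter_upwards [isOpen_compl_singleton.mem_nhds (by simpa using hη : η ∈ ({0}ᶜ : Set (Vec n)))]
      with x hx
    exact hom_deBarLsq hz (by simpa using hx) hlam j
  rw [wirt_congr hEv, wirt_const_mul _ (da_deBarLsq hz hη j)] at key
  exact (mul_left_cancel₀ hlam key).symm

lemma hom_dzgM {z η : Vec n} (hz : z ∈ S.D) (hη : η ≠ 0) {lam : ℂ} (hlam : lam ≠ 0)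
    (j l m : Fin n) : dz j (gM S.F l m) z (lam • η) = dz j (gM S.F l m) z η := by
  have hEv : (fun w => gM S.F l m w (lam • η)) =ᶠ[nhds z] fun w => gM S.F l m w η := by
    filter_upwards [S.isOpen_D.mem_nhds hz] with w hw
    exact hom_gM hw hη hlam l m
  exact wirt_congr hEv

lemma hom_gInv {z η : Vec n} (hz : z ∈ S.D) (hη : η ≠ 0) {lam : ℂ} (hlam : lam ≠ 0)
    (m i : Fin n) : gInv S.F m i z (lam • η) = gInv S.F m i z η := by
  unfold gInv
  have : gmat S.F z (lam • η) = gmat S.F z η := by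
    ext a b
    exact hom_gM hz hη hlam a b
  rw [this]

lemma hom_CFN {z η : Vec n} (hz : z ∈ S.D) (hη : η ≠ 0) {lam : ℂ} (hlam : lam ≠ 0)
    (i j : Fin n) : CFN S.F i j z (lam • η) = lam * CFN S.F i j z η := by
  unfold CFN
  rw [Finset.mul_sum]
  refine Finset.sum_congr rfl fun m _ => ?_
  rw [Finset.mul_sum]
  refine Finset.sum_congr rfl fun l _ => ?_
  rw [hom_gInv hz hη hlam, hom_dzgM hz hη hlam]
  have : (lam • η) l = lam * η l := rfl
  rw [this]
  ring

lemma hom_spray {z η : Vec n} (hz : z ∈ S.D) (hη : η ≠ 0) {lam : ℂ} (hlam : lam ≠ 0)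
    (i : Fin n) : spray S.F i z (lam • η) = lam^2 * spray S.F i z η := by
  unfold spray
  have hterm : ∀ j : Fin n, CFN S.F i j z (lam • η) * (lam • η) j
      = lam^2 * (CFN S.F i j z η * η j) := by
    intro j
    rw [hom_CFN hz hη hlam]
    have h : (lam • η) j = lam * η j := rfl
    rw [h]; ring
  have hsum : ∑ j, lam^2 * (CFN S.F i j z η * η j)
      = lam^2 * ∑ j, CFN S.F i j z η * η j := (Finset.mul_sum _ _ _).symm
  calc (1:ℂ)/2 * ∑ j, CFN S.F i j z (lam • η) * (lam • η) j
      = (1:ℂ)/2 * ∑ j, lam^2 * (CFN S.F i j z η * η j) := by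
        congr 1; exact Finset.sum_congr rfl fun j _ => hterm j
    _ = lam^2 * ((1:ℂ)/2 * ∑ j, CFN S.F i j z η * η j) := by rw [hsum]; ring

lemma hom_cN {z η : Vec n} (hz : z ∈ S.D) (hη : η ≠ 0) {lam : ℂ} (hlam : lam ≠ 0)
    (i j : Fin n) : cN S.F i j z (lam • η) = lam * cN S.F i j z η := by
  set G := spray S.F i z with hG
  have hd : DifferentiableAt ℝ G (lam • η) := da_spray hz (smul_ne_zero' hη hlam) i
  have key := wirt_comp_smul (f := G) (v := η) (k := j) lam hd
  have hEv : (fun x => G (lam • x)) =ᶠ[nhds η] fun x => lam^2 * G x := by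
    filter_upwards [isOpen_compl_singleton.mem_nhds (by simpa using hη : η ∈ ({0}ᶜ : Set (Vec n)))]
      with x hx
    exact hom_spray hz (by simpa using hx) hlam i
  rw [wirt_congr hEv, wirt_const_mul _ (da_spray hz hη i)] at key
  have key2 : lam * (lam * wirt j G η) = lam * wirt j G (lam • η) := by rw [← key]; ring
  exact (mul_left_cancel₀ hlam key2).symm

lemma hom_BL {z η : Vec n} (hz : z ∈ S.D) (hη : η ≠ 0) {lam : ℂ} (hlam : lam ≠ 0)
    (i j k : Fin n) : BL S.F i j k z (lam • η) = BL S.F i j k z η := by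
  set G := cN S.F i j z with hG
  have hd : DifferentiableAt ℝ G (lam • η) := da_cN hz (smul_ne_zero' hη hlam) i j
  have key := wirt_comp_smul (f := G) (v := η) (k := k) lam hd
  have hEv : (fun x => G (lam • x)) =ᶠ[nhds η] fun x => lam * G x := by
    filter_upwards [isOpen_compl_singleton.mem_nhds (by simpa using hη : η ∈ ({0}ᶜ : Set (Vec n)))]
      with x hx
    exact hom_cN hz (by simpa using hx) hlam i j
  rw [wirt_congr hEv, wirt_const_mul _ (da_cN hz hη i j)] at key
  exact (mul_left_cancel₀ hlam key).symm

lemma euler_cN {z η : Vec n} (hz : z ∈ S.D) (hη : η ≠ 0) (i : Fin n) :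
    ∑ j, η j * cN S.F i j z η = 2 * spray S.F i z η := by
  have h2 : ∀ᶠ lam : ℂ in nhds 1, spray S.F i z (lam • η) = lam^2 * spray S.F i z η := by
    filter_upwards [eventually_ne_nhds (one_ne_zero : (1:ℂ) ≠ 0)] with lam hlam
    exact hom_spray hz hη hlam i
  have := euler_wirt 2 (by norm_num) (da_spray hz hη i) h2
  simpa [cN, de] using this
end SHom

lemma wirt_sub {f g : Vec n → ℂ} {v : Vec n} {k : Fin n}
    (hf : DifferentiableAt ℝ f v) (hg : DifferentiableAt ℝ g v) :
    wirt k (fun x => f x - g x) v = wirt k f v - wirt k g v := by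
  unfold wirt; rw [fderiv_fun_sub hf hg]; simp; ring

lemma wirtBar_sub {f g : Vec n → ℂ} {v : Vec n} {k : Fin n}
    (hf : DifferentiableAt ℝ f v) (hg : DifferentiableAt ℝ g v) :
    wirtBar k (fun x => f x - g x) v = wirtBar k f v - wirtBar k g v := by
  unfold wirtBar; rw [fderiv_fun_sub hf hg]; simp; ring

lemma da_coord (j : Fin n) (v : Vec n) : DifferentiableAt ℝ (fun x : Vec n => x j) v :=
  (ContinuousLinearMap.proj (R := ℝ) (φ := fun _ : Fin n => ℂ) j).differentiableAt

lemma fderiv_coord (j : Fin n) (v w : Vec n) :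
    fderiv ℝ (fun x : Vec n => x j) v w = w j := by
  have hcl : (fun x : Vec n => x j)
      = ⇑(ContinuousLinearMap.proj (R := ℝ) (φ := fun _ : Fin n => ℂ) j) := rfl
  rw [hcl, ContinuousLinearMap.fderiv]
  rfl

lemma wirt_coord (j k : Fin n) (v : Vec n) :
    wirt k (fun x : Vec n => x j) v = if k = j then 1 else 0 := by
  unfold wirt
  rw [fderiv_coord, fderiv_coord]
  by_cases h : k = j
  · subst h
    rw [if_pos rfl, Pi.single_eq_same, Pi.single_eq_same]
    have hI : Complex.I * Complex.I = -1 := Complex.I_mul_I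
    linear_combination (-1/2 : ℂ) * hI
  · rw [if_neg h, Pi.single_eq_of_ne (Ne.symm h), Pi.single_eq_of_ne (Ne.symm h)]
    simp

lemma wirtBar_coord (j k : Fin n) (v : Vec n) :
    wirtBar k (fun x : Vec n => x j) v = 0 := by
  unfold wirtBar
  rw [fderiv_coord, fderiv_coord]
  by_cases h : k = j
  · subst h
    rw [Pi.single_eq_same, Pi.single_eq_same]
    have hI : Complex.I * Complex.I = -1 := Complex.I_mul_I
    linear_combination (1/2 : ℂ) * hI
  · rw [Pi.single_eq_of_ne (Ne.symm h), Pi.single_eq_of_ne (Ne.symm h)]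
    simp

section Imps
variable {S : ComplexFinslerSpace n}

lemma imp_i_iii
    (h1 : ∀ i j k : Fin n, ∀ z ∈ S.D, ∀ η η' : Vec n, η ≠ 0 → η' ≠ 0 →
      BL S.F i j k z η = BL S.F i j k z η') :
    ∀ i j k : Fin n, ∀ z ∈ S.D, ∀ η : Vec n, η ≠ 0 → BLmix S.F i j k z η = 0 := by
  intro i j k z hz η hη
  set c : Fin n → ℂ := fun m => BL S.F i j m z η with hc
  set lin : Vec n → ℂ := fun x => ∑ m, c m * x m with hlin
  have da_lin : ∀ x : Vec n, DifferentiableAt ℝ lin x := fun x =>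
    DifferentiableAt.fun_sum fun m _ => (da_coord m x).const_mul (c m)
  set h : Vec n → ℂ := fun x => cN S.F i j z x - lin x with hh
  have da_h : ∀ x : Vec n, x ≠ 0 → DifferentiableAt ℝ h x := fun x hx =>
    (da_cN hz hx i j).sub (da_lin x)
  have wirt_lin : ∀ (x : Vec n) (m : Fin n), wirt m lin x = c m := by
    intro x m
    rw [hlin, wirt_sum Finset.univ (fun l _ => (da_coord l x).const_mul (c l))]
    have hterm : ∀ l : Fin n, wirt m (fun x : Vec n => c l * x l) x
        = c l * (if m = l then 1 else 0) := fun l => by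
      rw [wirt_const_mul (c l) (da_coord l x), wirt_coord]
    rw [Finset.sum_congr rfl fun l _ => hterm l]
    simp
  have wirtBar_lin : ∀ (x : Vec n) (m : Fin n), wirtBar m lin x = 0 := by
    intro x m
    rw [hlin, wirtBar_sum Finset.univ (fun l _ => (da_coord l x).const_mul (c l))]
    have hterm : ∀ l : Fin n, wirtBar m (fun x : Vec n => c l * x l) x = 0 := fun l => by
      rw [wirtBar_const_mul (c l) (da_coord l x), wirtBar_coord]; ring
    rw [Finset.sum_congr rfl fun l _ => hterm l]
    simp
  have hwirt : ∀ (x : Vec n), x ≠ 0 → ∀ m, wirt m h x = 0 := by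
    intro x hx m
    rw [hh]
    rw [wirt_sub (da_cN hz hx i j) (da_lin x), wirt_lin]
    have hBL : wirt m (cN S.F i j z) x = BL S.F i j m z x := rfl
    rw [hBL, h1 i j m z hz x η hx hη]
    exact sub_self _
  have hvanish : ∀ x : Vec n, x ≠ 0 → h x = 0 := by
    intro x hx
    have hom : ∀ᶠ lam : ℂ in nhds 1, h (lam • x) = lam ^ 1 * h x := by
      filter_upwards [eventually_ne_nhds (one_ne_zero : (1:ℂ) ≠ 0)] with lam hlam
      rw [pow_one, hh]
      simp only
      rw [hom_cN hz hx hlam i j]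
      have hlineq : lin (lam • x) = lam * lin x := by
        rw [hlin]
        simp only
        rw [Finset.mul_sum]
        refine Finset.sum_congr rfl fun m _ => ?_
        have hsm : (lam • x) m = lam * x m := rfl
        rw [hsm]; ring
      rw [hlineq]; ring
    obtain ⟨e1, e2⟩ := euler_directional 1 le_rfl (da_h x hx) hom
    rw [fderiv_apply_eq (da_h x hx)] at e1 e2
    simp only [hwirt x hx, mul_zero, zero_add, Nat.cast_one, one_mul] at e1 e2
    have hconj : ∀ m : Fin n, conj ((Complex.I • x) m) * wirtBar m h x
        = -Complex.I * (conj (x m) * wirtBar m h x) := by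
      intro m
      have hsm : (Complex.I • x) m = Complex.I * x m := rfl
      rw [hsm, map_mul, Complex.conj_I]; ring
    rw [Finset.sum_congr rfl fun m _ => hconj m, ← Finset.mul_sum, e1] at e2
    have h2I : (2 * Complex.I) * h x = 0 := by linear_combination -e2
    rcases mul_eq_zero.mp h2I with h0 | h0
    · exact absurd h0 (by simp [Complex.I_ne_zero])
    · exact h0
  have hEv : cN S.F i j z =ᶠ[nhds η] lin := by
    filter_upwards [isOpen_compl_singleton.mem_nhds (by simpa using hη : η ∈ ({0}ᶜ : Set (Vec n)))]
      with x hx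
    exact sub_eq_zero.mp (hvanish x (by simpa using hx))
  show wirtBar k (cN S.F i j z) η = 0
  rw [wirtBar_congr hEv, wirtBar_lin]

lemma imp_iii_ii
    (h3 : ∀ i j k : Fin n, ∀ z ∈ S.D, ∀ η : Vec n, η ≠ 0 → BLmix S.F i j k z η = 0) :
    ∀ i k : Fin n, ∀ z ∈ S.D, ∀ η : Vec n, η ≠ 0 → deBar k (spray S.F i) z η = 0 := by
  intro i k z hz η hη
  have hEv : (fun x => ∑ j, x j * cN S.F i j z x) =ᶠ[nhds η]
      (fun x => 2 * spray S.F i z x) := by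
    filter_upwards [isOpen_compl_singleton.mem_nhds (by simpa using hη : η ∈ ({0}ᶜ : Set (Vec n)))]
      with x hx
    exact euler_cN hz (by simpa using hx) i
  have h0 := wirtBar_congr (k := k) hEv
  rw [wirtBar_sum Finset.univ (fun j _ => (da_coord j η).fun_mul (da_cN hz hη i j))] at h0
  rw [wirtBar_const_mul 2 (da_spray hz hη i)] at h0
  have hterm : ∀ j : Fin n, wirtBar k (fun x : Vec n => x j * cN S.F i j z x) η = 0 := by
    intro j
    rw [wirtBar_mul (da_coord j η) (da_cN hz hη i j), wirtBar_coord]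
    have hBLm : wirtBar k (cN S.F i j z) η = BLmix S.F i j k z η := rfl
    rw [hBLm, h3 i j k z hz η hη]
    ring
  rw [Finset.sum_congr rfl fun j _ => hterm j] at h0
  simp only [Finset.sum_const_zero] at h0
  have h2 : (2:ℂ) * wirtBar k (spray S.F i z) η = 0 := h0.symm
  have := mul_eq_zero.mp h2
  rcases this with h' | h'
  · norm_num at h'
  · exact h'

lemma imp_ii_i
    (h2 : ∀ i k : Fin n, ∀ z ∈ S.D, ∀ η : Vec n, η ≠ 0 → deBar k (spray S.F i) z η = 0) :
    ∀ i j k : Fin n, ∀ z ∈ S.D, ∀ η η' : Vec n, η ≠ 0 → η' ≠ 0 →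
      BL S.F i j k z η = BL S.F i j k z η' := by
  intro i j k z hz η η' hη hη'
  have hA : ∀ (m : Fin n) (x : Vec n), x ≠ 0 → wirtBar m (cN S.F i j z) x = 0 := by
    intro m x hx
    have hcd : ContDiffAt ℝ 2 (spray S.F i z) x := (cd_spray hz hx i).of_le (by norm_cast)
    have hEv : (fun y => wirtBar m (spray S.F i z) y) =ᶠ[nhds x] fun _ => (0:ℂ) := by
      filter_upwards [isOpen_compl_singleton.mem_nhds
        (by simpa using hx : x ∈ ({0}ᶜ : Set (Vec n)))] with y hy
      exact h2 i m z hz y (by simpa using hy)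
    calc wirtBar m (cN S.F i j z) x = wirtBar m (wirt j (spray S.F i z)) x := rfl
      _ = wirt j (wirtBar m (spray S.F i z)) x := (wirt_wirtBar_comm hcd j m).symm
      _ = wirt j (fun _ => (0:ℂ)) x := wirt_congr hEv
      _ = 0 := wirt_const 0
  have hB : ∀ (m : Fin n) (x : Vec n), x ≠ 0 → wirtBar m (BL S.F i j k z) x = 0 := by
    intro m x hx
    have hcd : ContDiffAt ℝ 2 (cN S.F i j z) x := (cd_cN hz hx i j).of_le (by norm_cast)
    have hEv : (fun y => wirtBar m (cN S.F i j z) y) =ᶠ[nhds x] fun _ => (0:ℂ) := by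
      filter_upwards [isOpen_compl_singleton.mem_nhds
        (by simpa using hx : x ∈ ({0}ᶜ : Set (Vec n)))] with y hy
      exact hA m y (by simpa using hy)
    calc wirtBar m (BL S.F i j k z) x = wirtBar m (wirt k (cN S.F i j z)) x := rfl
      _ = wirt k (wirtBar m (cN S.F i j z)) x := (wirt_wirtBar_comm hcd k m).symm
      _ = wirt k (fun _ => (0:ℂ)) x := wirt_congr hEv
      _ = 0 := wirt_const 0
  have hHol : ∀ x : Vec n, x ≠ 0 → DifferentiableAt ℂ (BL S.F i j k z) x := fun x hx =>
    differentiableAt_complex_of_wirtBar (da_BL hz hx i j k) (fun m => hB m x hx)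
  by_cases hdep : ∃ mu : ℂ, η = mu • η'
  · obtain ⟨mu, rfl⟩ := hdep
    have hmu : mu ≠ 0 := by
      rintro rfl
      exact hη (zero_smul ℂ η')
    exact hom_BL hz hη' hmu i j k
  · push_neg at hdep
    have hne : η - η' ≠ 0 := by
      intro h0
      exact hdep 1 (by rw [one_smul]; exact (sub_eq_zero.mp h0))
    have hline : ∀ lam : ℂ, η' + lam • (η - η') ≠ 0 := by
      intro lam h0
      by_cases hl : lam = 0
      · subst hl
        simp at h0
        exact hη' h0
      · apply hdep (1 - lam⁻¹)
        have hinv : lam * lam⁻¹ = 1 := mul_inv_cancel₀ hl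
        funext a
        have ha := congrFun h0 a
        simp only [Pi.add_apply, Pi.smul_apply, Pi.sub_apply, smul_eq_mul, Pi.zero_apply] at ha
        show η a = (1 - lam⁻¹) * η' a
        linear_combination lam⁻¹ * ha + (η' a - η a) * hinv
    have hline2 : ∀ mu : ℂ, mu • η' + (η - η') ≠ 0 := by
      intro mu h0
      apply hdep (1 - mu)
      funext a
      have ha := congrFun h0 a
      simp only [Pi.add_apply, Pi.smul_apply, Pi.sub_apply, smul_eq_mul, Pi.zero_apply] at ha
      show η a = (1 - mu) * η' a
      linear_combination ha
    set f := BL S.F i j k z with hf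
    set g : ℂ → ℂ := fun lam => f (η' + lam • (η - η')) with hg
    set G : ℂ → ℂ := fun mu => f (mu • η' + (η - η')) with hG
    have hgdiff : Differentiable ℂ g := by
      intro lam
      have hcurve : DifferentiableAt ℂ (fun lam : ℂ => η' + lam • (η - η')) lam :=
        ((differentiableAt_id.smul_const (η - η')).const_add η')
      exact (hHol _ (hline lam)).comp lam hcurve
    have hGdiff : Differentiable ℂ G := by
      intro mu
      have hcurve : DifferentiableAt ℂ (fun mu : ℂ => mu • η' + (η - η')) mu :=
        ((differentiableAt_id.smul_const η').add_const (η - η'))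
      exact (hHol _ (hline2 mu)).comp mu hcurve
    have hgG : ∀ lam : ℂ, lam ≠ 0 → g lam = G lam⁻¹ := by
      intro lam hlam
      have hdec : η' + lam • (η - η') = lam • (lam⁻¹ • η' + (η - η')) := by
        rw [smul_add, smul_smul, mul_inv_cancel₀ hlam, one_smul]
      rw [hg, hG]
      simp only
      rw [hdec, hf]
      exact hom_BL hz (hline2 lam⁻¹) hlam i j k
    have hbd : Bornology.IsBounded (range g) := by
      have h1 : Bornology.IsBounded (g '' (Metric.closedBall 0 1)) :=
        ((isCompact_closedBall (0:ℂ) 1).image hgdiff.continuous).isBounded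
      have hBn : Bornology.IsBounded (G '' (Metric.closedBall 0 1)) :=
        ((isCompact_closedBall (0:ℂ) 1).image hGdiff.continuous).isBounded
      refine (h1.union hBn).subset ?_
      rintro _ ⟨lam, rfl⟩
      by_cases hl : ‖lam‖ ≤ 1
      · exact Or.inl ⟨lam, by simpa [Metric.mem_closedBall] using hl, rfl⟩
      · push_neg at hl
        have hlam0 : lam ≠ 0 := by
          intro h0; subst h0; simp at hl; linarith
        refine Or.inr ⟨lam⁻¹, ?_, (hgG lam hlam0).symm⟩
        simp only [Metric.mem_closedBall, dist_zero_right, norm_inv]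
        rw [inv_le_comm₀ (by linarith) one_pos]
        simpa using hl.le
    have hkey := hgdiff.apply_eq_apply_of_bounded hbd 1 0
    have hg1 : g 1 = f η := by
      rw [hg]; simp only
      congr 1
      rw [one_smul]
      abel
    have hg0 : g 0 = f η' := by
      rw [hg]; simp only
      congr 1
      rw [zero_smul, add_zero]
    rw [hg1, hg0] at hkey
    exact hkey

end Imps

end

/-- Theorem 3.6: characterizations of generalized Berwald spaces. -/
theorem statement14 {n : ℕ} (S : ComplexFinslerSpace n) :
    List.TFAE
      [ -- (i) generalized Berwald: ᴮLⁱ_{jk} depend only on z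
        ∀ i j k : Fin n, ∀ z ∈ S.D, ∀ η η' : Vec n, η ≠ 0 → η' ≠ 0 →
          BL S.F i j k z η = BL S.F i j k z η',
        -- (ii) Gⁱ holomorphic in η
        ∀ i k : Fin n, ∀ z ∈ S.D, ∀ η : Vec n, η ≠ 0 →
          deBar k (spray S.F i) z η = 0,
        -- (iii) BΓ of (1,0)-type
        ∀ i j k : Fin n, ∀ z ∈ S.D, ∀ η : Vec n, η ≠ 0 →
          BLmix S.F i j k z η = 0 ] := by
  tfae_have 1 → 3 := fun h1 => imp_i_iii h1
  tfae_have 3 → 2 := fun h3 => imp_iii_ii h3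
  tfae_have 2 → 1 := fun h2 => imp_ii_i h2
  tfae_finish
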